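/- Let S and O be finite nonempty sets and let M₁ = (r,p₁) and M₂ = (r,p₂) be SMDP models over (S,O) sharing the same reward function r, with γ̄₂ := max_{s,o} ∑_{s'} p₂(s,o,s') < 1. Let Q₁ and Q₂ be Bellman-optimal value functions for M₁ and M₂ respectively, and let V₁(s) = max_o Q₁(s,o). Then ‖Q₁ − Q₂‖_∞ ≤ (1 − γ̄₂)⁻¹ · max_{s,o} | ∑_{s'} ( p₁(s,o,s') − p₂(s,o,s') ) · V₁(s') |. -/

import Mathlib

/-!
Subtracting the two Bellman equations, the rewards cancel and
`Q₁ - Q₂ = (p₁ - p₂) V₁ + p₂ (V₁ - V₂)`. The first term is the backed-up gap `Δ`; since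
`max` is 1-Lipschitz for the sup norm, `‖V₁ - V₂‖ ≤ ‖Q₁ - Q₂‖`, so the second term is at most
`γ̄₂ ‖Q₁ - Q₂‖`. Hence `‖Q₁ - Q₂‖ ≤ Δ + γ̄₂ ‖Q₁ - Q₂‖`, and `γ̄₂ < 1` lets us solve for `‖Q₁ - Q₂‖`.
-/

/-- Maximum of a real-valued function over a finite nonempty type. -/
noncomputable def fmax {α : Type*} [Fintype α] [Nonempty α] (f : α → ℝ) : ℝ :=
  Finset.univ.sup' Finset.univ_nonempty f

section fmax

variable {α : Type*} [Fintype α] [Nonempty α]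

lemma le_fmax (f : α → ℝ) (a : α) : f a ≤ fmax f :=
  Finset.le_sup' f (Finset.mem_univ a)

lemma fmax_le {f : α → ℝ} {c : ℝ} (h : ∀ a, f a ≤ c) : fmax f ≤ c :=
  Finset.sup'_le _ _ fun a _ => h a

lemma fmax_le_fmax_add_fmax_abs_sub (f g : α → ℝ) :
    fmax f ≤ fmax g + fmax (fun a => |f a - g a|) :=
  fmax_le fun a => by
    linarith [le_fmax g a, le_fmax (fun a => |f a - g a|) a, le_abs_self (f a - g a)]

lemma abs_fmax_sub_fmax_le (f g : α → ℝ) :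
    |fmax f - fmax g| ≤ fmax (fun a => |f a - g a|) := by
  have hfg := fmax_le_fmax_add_fmax_abs_sub f g
  have hgf := fmax_le_fmax_add_fmax_abs_sub g f
  simp only [abs_sub_comm (g _)] at hgf
  rw [abs_sub_le_iff]
  constructor <;> linarith

end fmax

lemma abs_sum_mul_le_sum_mul {ι : Type*} [Fintype ι] {w v : ι → ℝ} {c : ℝ}
    (hw : ∀ i, 0 ≤ w i) (hv : ∀ i, |v i| ≤ c) :
    |∑ i, w i * v i| ≤ (∑ i, w i) * c :=
  calc |∑ i, w i * v i| ≤ ∑ i, |w i * v i| := Finset.abs_sum_le_sum_abs _ _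
    _ ≤ ∑ i, w i * c := Finset.sum_le_sum fun i _ => by
      rw [abs_mul, abs_of_nonneg (hw i)]
      exact mul_le_mul_of_nonneg_left (hv i) (hw i)
    _ = (∑ i, w i) * c := (Finset.sum_mul _ _ _).symm

lemma abs_backup_sub_backup_le {ι : Type*} [Fintype ι] (r : ℝ) (p₁ p₂ V₁ V₂ : ι → ℝ) {c : ℝ}
    (hp₂ : ∀ i, 0 ≤ p₂ i) (hV : ∀ i, |V₁ i - V₂ i| ≤ c) :
    |(r + ∑ i, p₁ i * V₁ i) - (r + ∑ i, p₂ i * V₂ i)| ≤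
      |∑ i, (p₁ i - p₂ i) * V₁ i| + (∑ i, p₂ i) * c := by
  have hsplit : (r + ∑ i, p₁ i * V₁ i) - (r + ∑ i, p₂ i * V₂ i) =
      ∑ i, (p₁ i - p₂ i) * V₁ i + ∑ i, p₂ i * (V₁ i - V₂ i) := by
    simp only [sub_mul, mul_sub, Finset.sum_sub_distrib]
    ring
  rw [hsplit]
  exact (abs_add_le _ _).trans (add_le_add_right (abs_sum_mul_le_sum_mul hp₂ hV) _)

lemma le_inv_one_sub_mul_of_le_add_mul {D Δ γ : ℝ} (hγ : γ < 1) (h : D ≤ Δ + γ * D) :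
    D ≤ (1 - γ)⁻¹ * Δ :=
  (le_inv_mul_iff₀ (sub_pos.2 hγ)).2 (by linarith)

theorem simulation_lemma_general {S O : Type*} [Fintype S] [Fintype O] [Nonempty S] [Nonempty O]
    (r : S → O → ℝ) (p₁ p₂ : S → O → S → ℝ) (γbar₂ : ℝ)
    (hp₂ : ∀ s o s', 0 ≤ p₂ s o s')
    (hγ₂ : γbar₂ = fmax (fun so : S × O => ∑ s' : S, p₂ so.1 so.2 s'))
    (hγ₂lt : γbar₂ < 1)
    (Q₁ Q₂ : S → O → ℝ)
    (hQ₁ : ∀ s o, Q₁ s o = r s o + ∑ s' : S, p₁ s o s' * fmax (fun o' => Q₁ s' o'))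
    (hQ₂ : ∀ s o, Q₂ s o = r s o + ∑ s' : S, p₂ s o s' * fmax (fun o' => Q₂ s' o'))
    (V₁ : S → ℝ) (hV₁ : ∀ s, V₁ s = fmax (fun o => Q₁ s o)) :
    fmax (fun so : S × O => |Q₁ so.1 so.2 - Q₂ so.1 so.2|) ≤
      (1 - γbar₂)⁻¹ *
        fmax (fun so : S × O =>
          |∑ s' : S, (p₁ so.1 so.2 s' - p₂ so.1 so.2 s') * V₁ s'|) := by
  obtain rfl : V₁ = fun s => fmax (Q₁ s) := funext hV₁
  set D := fmax (fun so : S × O => |Q₁ so.1 so.2 - Q₂ so.1 so.2|)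
  have hQ : ∀ s o, |Q₁ s o - Q₂ s o| ≤ D := fun s o =>
    le_fmax (fun so : S × O => |Q₁ so.1 so.2 - Q₂ so.1 so.2|) (s, o)
  have hD : 0 ≤ D := (abs_nonneg _).trans (hQ (Classical.arbitrary S) (Classical.arbitrary O))
  have hV : ∀ s, |fmax (Q₁ s) - fmax (Q₂ s)| ≤ D := fun s =>
    (abs_fmax_sub_fmax_le _ _).trans (fmax_le (hQ s))
  refine le_inv_one_sub_mul_of_le_add_mul hγ₂lt (fmax_le fun ⟨s, o⟩ => ?_)
  have hγ : ∑ s', p₂ s o s' ≤ γbar₂ :=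
    hγ₂ ▸ le_fmax (fun so : S × O => ∑ s', p₂ so.1 so.2 s') (s, o)
  calc |Q₁ s o - Q₂ s o|
      ≤ |∑ s', (p₁ s o s' - p₂ s o s') * fmax (Q₁ s')| + (∑ s', p₂ s o s') * D := by
        rw [hQ₁, hQ₂]
        exact abs_backup_sub_backup_le _ _ _ _ _ (hp₂ s o) hV
    _ ≤ _ + γbar₂ * D := by
        gcongr
        exact le_fmax
          (fun so : S × O => |∑ s', (p₁ so.1 so.2 s' - p₂ so.1 so.2 s') * fmax (Q₁ s')|) (s, o)

/-- Simulation-lemma-style bound (Terms (B) and (C) in Theorem 3): optimal value functions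
of two SMDPs with identical rewards differ by at most the backed-up value gap. -/
theorem simulation_lemma {S O : Type*} [Fintype S] [Fintype O] [Nonempty S] [Nonempty O]
    (r : S → O → ℝ) (p₁ p₂ : S → O → S → ℝ) (γbar₂ : ℝ)
    (hp₁ : ∀ s o s', 0 ≤ p₁ s o s') (hp₂ : ∀ s o s', 0 ≤ p₂ s o s')
    (hγ₂ : γbar₂ = fmax (fun so : S × O => ∑ s' : S, p₂ so.1 so.2 s'))
    (hγ₂lt : γbar₂ < 1)
    (Q₁ Q₂ : S → O → ℝ)
    (hQ₁ : ∀ s o, Q₁ s o = r s o + ∑ s' : S, p₁ s o s' * fmax (fun o' => Q₁ s' o'))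
    (hQ₂ : ∀ s o, Q₂ s o = r s o + ∑ s' : S, p₂ s o s' * fmax (fun o' => Q₂ s' o'))
    (V₁ : S → ℝ) (hV₁ : ∀ s, V₁ s = fmax (fun o => Q₁ s o)) :
    fmax (fun so : S × O => |Q₁ so.1 so.2 - Q₂ so.1 so.2|) ≤
      (1 - γbar₂)⁻¹ *
        fmax (fun so : S × O =>
          |∑ s' : S, (p₁ so.1 so.2 s' - p₂ so.1 so.2 s') * V₁ s'|) :=
  simulation_lemma_general r p₁ p₂ γbar₂ hp₂ hγ₂ hγ₂lt Q₁ Q₂ hQ₁ hQ₂ V₁ hV₁
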